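/- In the construction of the two-bright-two-dark tau functions, assume that ε₁ := c₁ = c₂, ε₂ := c₃ = c₄, α := α₃ = −α₄, ρ := ρ₃ = ρ₄ (α, ρ real), and that the complex parameters satisfy p_i = p_{N+1−i}^*, ξ_{i,0}^* = ξ_{N+1−i,0}, and C_i = D_{N+1−i}^* for all 1 ≤ i ≤ N. Then identically on ℝ²: g₁ = g₂^* and h₃ = h₄^*. -/
import Mathlib

open Complex Matrix

noncomputable section

/-- Border a square matrix with one extra column, one extra row, and corner entry `0`. -/
def bord {n : ℕ} (M : Matrix (Fin n) (Fin n) ℂ) (col row : Fin n → ℂ) :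
    Matrix (Fin (n + 1)) (Fin (n + 1)) ℂ :=
  Matrix.of fun i j =>
    if hi : (i : ℕ) < n then
      if hj : (j : ℕ) < n then M ⟨i, hi⟩ ⟨j, hj⟩ else col ⟨i, hi⟩
    else if hj : (j : ℕ) < n then row ⟨j, hj⟩ else 0

/-- `q_i` (the same formula with `c₁` replaced by `c₂` gives `r_i`). -/
def qP {N : ℕ} (c₁ c₃ c₄ ρ₃ ρ₄ α₃ α₄ : ℝ) (p : Fin N → ℂ) (i : Fin N) : ℂ :=
  (1 / (c₁ : ℂ)) * (-(p i) + (c₃ : ℂ) * (ρ₃ : ℂ) ^ 2 / (p i - Complex.I * (α₃ : ℂ))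
    + (c₄ : ℂ) * (ρ₄ : ℂ) ^ 2 / (p i - Complex.I * (α₄ : ℂ)))

/-- The phase `ξ_i(x,t) = p_i (x - 3(c₃ρ₃² + c₄ρ₄²) t) + p_i³ t + ξ_{i,0}`. -/
def xiP {N : ℕ} (c₃ c₄ ρ₃ ρ₄ : ℝ) (p ξ0 : Fin N → ℂ) (i : Fin N) (x t : ℝ) : ℂ :=
  p i * ((x : ℂ) - 3 * ((c₃ : ℂ) * (ρ₃ : ℂ) ^ 2 + (c₄ : ℂ) * (ρ₄ : ℂ) ^ 2) * (t : ℂ))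
    + (p i) ^ 3 * (t : ℂ) + ξ0 i

/-- The matrix entry `m_{ij}^{k,l}`. -/
def mEnt {N : ℕ} (c₁ c₂ c₃ c₄ ρ₃ ρ₄ α₃ α₄ : ℝ) (p ξ0 C D : Fin N → ℂ) (k l : ℕ)
    (i j : Fin N) (x t : ℝ) : ℂ :=
  (1 / (p i + star (p j))) *
      (-((p i - Complex.I * (α₃ : ℂ)) / (star (p j) + Complex.I * (α₃ : ℂ)))) ^ k *
      (-((p i - Complex.I * (α₄ : ℂ)) / (star (p j) + Complex.I * (α₄ : ℂ)))) ^ l *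
      Complex.exp (xiP c₃ c₄ ρ₃ ρ₄ p ξ0 i x t + star (xiP c₃ c₄ ρ₃ ρ₄ p ξ0 j x t))
    + star (C i) * C j /
        (qP c₁ c₃ c₄ ρ₃ ρ₄ α₃ α₄ p i + star (qP c₁ c₃ c₄ ρ₃ ρ₄ α₃ α₄ p j))
    + star (D i) * D j /
        (qP c₂ c₃ c₄ ρ₃ ρ₄ α₃ α₄ p i + star (qP c₂ c₃ c₄ ρ₃ ρ₄ α₃ α₄ p j))

/-- `g₁`: bordered determinant with last column `Φ` and last row `-Ψ̄ᵀ`. -/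
def g1Tau {N : ℕ} (c₁ c₂ c₃ c₄ ρ₃ ρ₄ α₃ α₄ : ℝ) (p ξ0 C D : Fin N → ℂ) (x t : ℝ) : ℂ :=
  (bord (Matrix.of fun i j => mEnt c₁ c₂ c₃ c₄ ρ₃ ρ₄ α₃ α₄ p ξ0 C D 0 0 i j x t)
    (fun i => Complex.exp (xiP c₃ c₄ ρ₃ ρ₄ p ξ0 i x t)) (fun j => -C j)).det

/-- `g₂`: bordered determinant with last column `Φ` and last row `-Ῡᵀ`. -/
def g2Tau {N : ℕ} (c₁ c₂ c₃ c₄ ρ₃ ρ₄ α₃ α₄ : ℝ) (p ξ0 C D : Fin N → ℂ) (x t : ℝ) : ℂ :=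
  (bord (Matrix.of fun i j => mEnt c₁ c₂ c₃ c₄ ρ₃ ρ₄ α₃ α₄ p ξ0 C D 0 0 i j x t)
    (fun i => Complex.exp (xiP c₃ c₄ ρ₃ ρ₄ p ξ0 i x t)) (fun j => -D j)).det

/-- `h₃ = det M_{1,0}`. -/
def h3Tau {N : ℕ} (c₁ c₂ c₃ c₄ ρ₃ ρ₄ α₃ α₄ : ℝ) (p ξ0 C D : Fin N → ℂ) (x t : ℝ) : ℂ :=
  (Matrix.of fun i j => mEnt c₁ c₂ c₃ c₄ ρ₃ ρ₄ α₃ α₄ p ξ0 C D 1 0 i j x t).det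

/-- `h₄ = det M_{0,1}`. -/
def h4Tau {N : ℕ} (c₁ c₂ c₃ c₄ ρ₃ ρ₄ α₃ α₄ : ℝ) (p ξ0 C D : Fin N → ℂ) (x t : ℝ) : ℂ :=
  (Matrix.of fun i j => mEnt c₁ c₂ c₃ c₄ ρ₃ ρ₄ α₃ α₄ p ξ0 C D 0 1 i j x t).det

lemma det_map_star {m : Type*} [Fintype m] [DecidableEq m] (A : Matrix m m ℂ) :
    (A.map (starRingEnd ℂ)).det = star A.det := by
  rw [show A.map ⇑(starRingEnd ℂ) = (starRingEnd ℂ).mapMatrix A from rfl,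
    ← RingHom.map_det, Complex.star_def]

/-- The permutation of `Fin (N+1)` reversing the first `N` entries and fixing the last. -/
def revP (N : ℕ) : Equiv.Perm (Fin (N + 1)) :=
  Function.Involutive.toPerm
    (fun i => if h : (i : ℕ) < N then ⟨N - 1 - (i : ℕ), by omega⟩ else i)
    (by
      intro i
      by_cases h : (i : ℕ) < N
      · have h2 : N - 1 - (i : ℕ) < N := by omega
        simp only [h, dif_pos, h2]
        ext
        simp
        omega
      · simp [h])

theorem stmt10 {N : ℕ} (hN : 1 ≤ N) (ρ₃ ρ₄ α₃ α₄ c₁ c₂ c₃ c₄ : ℝ) (hc : c₁ * c₂ ≠ 0)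
    (he1 : c₁ = c₂) (he2 : c₃ = c₄) (hα : α₃ = -α₄) (hρ : ρ₃ = ρ₄)
    (p ξ0 C D : Fin N → ℂ)
    (hp : ∀ i : Fin N, p i = star (p (Fin.rev i)))
    (hξ : ∀ i : Fin N, star (ξ0 i) = ξ0 (Fin.rev i))
    (hCD : ∀ i : Fin N, C i = star (D (Fin.rev i)))
    (h1 : ∀ i : Fin N, p i ≠ Complex.I * (α₃ : ℂ) ∧ p i ≠ Complex.I * (α₄ : ℂ))
    (h2 : ∀ j : Fin N,
      star (p j) ≠ -(Complex.I * (α₃ : ℂ)) ∧ star (p j) ≠ -(Complex.I * (α₄ : ℂ)))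
    (h3 : ∀ i j : Fin N, p i + star (p j) ≠ 0)
    (h4 : ∀ i j : Fin N,
      qP c₁ c₃ c₄ ρ₃ ρ₄ α₃ α₄ p i + star (qP c₁ c₃ c₄ ρ₃ ρ₄ α₃ α₄ p j) ≠ 0)
    (h5 : ∀ i j : Fin N,
      qP c₂ c₃ c₄ ρ₃ ρ₄ α₃ α₄ p i + star (qP c₂ c₃ c₄ ρ₃ ρ₄ α₃ α₄ p j) ≠ 0) :
    ∀ x t : ℝ,
      g1Tau c₁ c₂ c₃ c₄ ρ₃ ρ₄ α₃ α₄ p ξ0 C D x t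
          = star (g2Tau c₁ c₂ c₃ c₄ ρ₃ ρ₄ α₃ α₄ p ξ0 C D x t)
      ∧ h3Tau c₁ c₂ c₃ c₄ ρ₃ ρ₄ α₃ α₄ p ξ0 C D x t
          = star (h4Tau c₁ c₂ c₃ c₄ ρ₃ ρ₄ α₃ α₄ p ξ0 C D x t) := by
  subst he1 he2 hα hρ
  intro x t
  -- basic conjugation facts
  have hps : ∀ i : Fin N, (starRingEnd ℂ) (p (Fin.rev i)) = p i := by
    intro i; rw [← Complex.star_def]; exact (hp i).symm
  have hxi : ∀ (i : Fin N), (starRingEnd ℂ) (xiP c₃ c₃ ρ₃ ρ₃ p ξ0 (Fin.rev i) x t)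
      = xiP c₃ c₃ ρ₃ ρ₃ p ξ0 i x t := by
    intro i
    have h2' : (starRingEnd ℂ) (ξ0 (Fin.rev i)) = ξ0 i := by
      rw [← Complex.star_def, hξ (Fin.rev i), Fin.rev_rev]
    simp only [xiP, _root_.map_add, _root_.map_mul, _root_.map_pow,
      _root_.map_sub, _root_.map_ofNat, Complex.conj_ofReal, hps, h2']
  have hq : ∀ (i : Fin N), (starRingEnd ℂ) (qP c₁ c₃ c₃ ρ₃ ρ₃ (-α₄) α₄ p (Fin.rev i))
      = qP c₁ c₃ c₃ ρ₃ ρ₃ (-α₄) α₄ p i := by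
    intro i
    simp only [qP, _root_.map_add, _root_.map_mul, _root_.map_pow,
      _root_.map_sub, _root_.map_neg, _root_.map_div₀, _root_.map_one,
      Complex.conj_ofReal, Complex.conj_I, hps]
    push_cast
    ring
  have hCr : ∀ i : Fin N, (starRingEnd ℂ) (C (Fin.rev i)) = D i := by
    intro i
    rw [← Complex.star_def, hCD (Fin.rev i), Fin.rev_rev, star_star]
  have hDr : ∀ i : Fin N, (starRingEnd ℂ) (D (Fin.rev i)) = C i := by
    intro i
    rw [← Complex.star_def, ← hCD i]
  have hQ : ∀ a b : Fin N,
      (starRingEnd ℂ) (qP c₁ c₃ c₃ ρ₃ ρ₃ (-α₄) α₄ p (Fin.rev a)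
        + star (qP c₁ c₃ c₃ ρ₃ ρ₃ (-α₄) α₄ p (Fin.rev b)))
      = qP c₁ c₃ c₃ ρ₃ ρ₃ (-α₄) α₄ p a + star (qP c₁ c₃ c₃ ρ₃ ρ₃ (-α₄) α₄ p b) := by
    intro a b
    rw [_root_.map_add, hq a]
    congr 1
    exact congrArg (starRingEnd ℂ) (hq b)
  -- the key entry symmetry
  have key : ∀ (k l : ℕ) (i j : Fin N),
      mEnt c₁ c₁ c₃ c₃ ρ₃ ρ₃ (-α₄) α₄ p ξ0 C D k l i j x t
        = (starRingEnd ℂ)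
            (mEnt c₁ c₁ c₃ c₃ ρ₃ ρ₃ (-α₄) α₄ p ξ0 C D l k (Fin.rev i) (Fin.rev j) x t) := by
    intro k l i j
    have hq' : ∀ a : Fin N, qP c₁ c₃ c₃ ρ₃ ρ₃ (-α₄) α₄ p (Fin.rev a)
        = (starRingEnd ℂ) (qP c₁ c₃ c₃ ρ₃ ρ₃ (-α₄) α₄ p a) := by
      intro a
      have := congrArg (starRingEnd ℂ) (hq a)
      rwa [Complex.conj_conj] at this
    simp only [mEnt, Complex.star_def, _root_.map_add, _root_.map_mul, _root_.map_pow,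
      _root_.map_sub, _root_.map_neg, _root_.map_div₀, _root_.map_one, map_inv₀,
      Complex.conj_ofReal, Complex.conj_I, Complex.conj_conj, hps, hxi,
      ← Complex.exp_conj, hCr, hDr, hQ, hq, hq']
    push_cast
    ring
  -- facts about revP
  have hrev1 : ∀ (i : Fin (N + 1)) (hi : (i : ℕ) < N),
      revP N i = Fin.castSucc (Fin.rev ⟨(i : ℕ), hi⟩) := by
    intro i hi
    simp only [revP, Function.Involutive.toPerm, Equiv.coe_fn_mk, hi, dif_pos]
    ext
    simp [Fin.rev]
    omega
  have hrev2 : ∀ (i : Fin (N + 1)), ¬ (i : ℕ) < N → revP N i = i := by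
    intro i hi
    simp only [revP, Function.Involutive.toPerm, Equiv.coe_fn_mk, hi, dif_neg, not_false_iff]
  constructor
  · -- g part
    have hmat : (bord (Matrix.of fun i j => mEnt c₁ c₁ c₃ c₃ ρ₃ ρ₃ (-α₄) α₄ p ξ0 C D 0 0 i j x t)
        (fun i => Complex.exp (xiP c₃ c₃ ρ₃ ρ₃ p ξ0 i x t)) (fun j => -C j))
        = (((bord (Matrix.of fun i j => mEnt c₁ c₁ c₃ c₃ ρ₃ ρ₃ (-α₄) α₄ p ξ0 C D 0 0 i j x t)
            (fun i => Complex.exp (xiP c₃ c₃ ρ₃ ρ₃ p ξ0 i x t)) (fun j => -D j)).submatrix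
            (revP N) (revP N)).map (starRingEnd ℂ)) := by
      ext i j
      simp only [Matrix.map_apply, Matrix.submatrix_apply]
      by_cases hi : (i : ℕ) < N <;> by_cases hj : (j : ℕ) < N
      · rw [hrev1 i hi, hrev1 j hj]
        simp only [bord, Matrix.of_apply, Fin.coe_castSucc, hi, hj, Fin.is_lt, dif_pos]
        exact key 0 0 ⟨(i : ℕ), hi⟩ ⟨(j : ℕ), hj⟩
      · rw [hrev1 i hi, hrev2 j hj]
        simp only [bord, Matrix.of_apply, Fin.coe_castSucc, hi, hj, Fin.is_lt, dif_pos,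
          dif_neg, not_false_iff]
        rw [← Complex.exp_conj]
        exact congrArg Complex.exp (hxi ⟨(i : ℕ), hi⟩).symm
      · rw [hrev2 i hi, hrev1 j hj]
        simp only [bord, Matrix.of_apply, Fin.coe_castSucc, hi, hj, Fin.is_lt, dif_pos,
          dif_neg, not_false_iff]
        rw [_root_.map_neg]
        exact congrArg Neg.neg (hDr ⟨(j : ℕ), hj⟩).symm
      · rw [hrev2 i hi, hrev2 j hj]
        simp only [bord, Matrix.of_apply, hi, hj, dif_neg, not_false_iff, map_zero]
    rw [g1Tau, g2Tau, hmat, det_map_star, Matrix.det_submatrix_equiv_self]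
  · -- h part
    have hmat : (Matrix.of fun i j => mEnt c₁ c₁ c₃ c₃ ρ₃ ρ₃ (-α₄) α₄ p ξ0 C D 1 0 i j x t)
        = (((Matrix.of fun i j => mEnt c₁ c₁ c₃ c₃ ρ₃ ρ₃ (-α₄) α₄ p ξ0 C D 0 1 i j x t).submatrix
            Fin.revPerm Fin.revPerm).map (starRingEnd ℂ)) := by
      ext i j
      simp only [Matrix.map_apply, Matrix.submatrix_apply, Matrix.of_apply, Fin.revPerm_apply]
      exact key 1 0 i j
    rw [h3Tau, h4Tau, hmat, det_map_star, Matrix.det_submatrix_equiv_self]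

end
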